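/- Let J = S \ {s_{i-1}, s_i} and u, v ∈ (S_n)^J with u ≤ v and u^{-1}(i) ≤ v^{-1}(i). With D̃(u,v) = v^{-1}([i-1]) \ u^{-1}([i-1]) and ã_j(u,v) = |{r ∈ u^{-1}([i-1]) : r < j}| − |{r ∈ v^{-1}([i-1]) : r < j}|, one has R^{J,q}_{u,v}(q) = (−1)^{ℓ(v)−ℓ(u)} (1 − q + c·q^{1 + ã_{v^{-1}(i)}(u,v)}) ∏_{j ∈ D̃(u,v)} (1 − q^{ã_j(u,v)}), where c = 1 if u^{-1}(i) = v^{-1}(i) and c = 0 otherwise. -/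

import Mathlib

open Finset Polynomial

/-- The inversion number (Coxeter length) of a permutation of `ℕ`, counted on `{1, …, n}`. -/
def invNum (n : ℕ) (u : Equiv.Perm ℕ) : ℕ :=
  (((Finset.Icc 1 n) ×ˢ (Finset.Icc 1 n)).filter
    (fun p => p.1 < p.2 ∧ u p.2 < u p.1)).card

/-- `u` is a member of `S_n`: it fixes every point outside `{1, …, n}`. -/
def IsPermOn (n : ℕ) (u : Equiv.Perm ℕ) : Prop :=
  ∀ m, m ∉ Finset.Icc 1 n → u m = m

/-- The adjacent transposition `s_i`, interchanging `i` and `i + 1`. -/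
def sAdj (i : ℕ) : Equiv.Perm ℕ := Equiv.swap i (i + 1)

/-- The Bruhat order on `S_n`: `u ≤ v` iff `v` is obtained from `u` by successively
multiplying on the right by transpositions, increasing the length at each step. -/
def BruhatLE (n : ℕ) (u v : Equiv.Perm ℕ) : Prop :=
  Relation.ReflTransGen
    (fun a b => invNum n a < invNum n b ∧
      ∃ i j, 1 ≤ i ∧ i < j ∧ j ≤ n ∧ b = a * Equiv.swap i j) u v

/-- `(S_n)^J`, the minimal coset representatives, where `J = S \ {s_e : e ∈ E}`. -/
def MinReps (n : ℕ) (E : Set ℕ) (u : Equiv.Perm ℕ) : Prop :=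
  ∀ j, 1 ≤ j → j ≤ n - 1 → j ∉ E → invNum n u < invNum n (sAdj j * u)

/-- `|{r ∈ u⁻¹([m]) : r < j}|`, the number of positions `r < j` of `u` holding
an element of `{1, …, m}`. -/
def posLT (n m j : ℕ) (u : Equiv.Perm ℕ) : ℕ :=
  ((Finset.Icc 1 n).filter (fun r => r < j ∧ u r ∈ Finset.Icc 1 m)).card

/-- Deodhar's recursion with `x = q` for the parabolic `R`-polynomials of `S_n`,
for `J = S \ {s_e : e ∈ E}`. -/
def IsRFamilyQ (n : ℕ) (E : Set ℕ)
    (R : Equiv.Perm ℕ → Equiv.Perm ℕ → Polynomial ℤ) : Prop :=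
  (∀ u v, MinReps n E u → MinReps n E v → ¬ BruhatLE n u v → R u v = 0) ∧
  (∀ u, MinReps n E u → R u u = 1) ∧
  (∀ u v, MinReps n E u → MinReps n E v → BruhatLE n u v → u ≠ v →
    ∀ j, 1 ≤ j → j ≤ n - 1 → v (j + 1) < v j →
      ((u (j + 1) < u j → R u v = R (u * sAdj j) (v * sAdj j)) ∧
       (¬ u (j + 1) < u j → MinReps n E (u * sAdj j) →
          R u v = X * R (u * sAdj j) (v * sAdj j) + (X - 1) * R u (v * sAdj j)) ∧
       (¬ u (j + 1) < u j → ¬ MinReps n E (u * sAdj j) →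
          R u v = - R u (v * sAdj j))))

/-!
Write `F(u, v)` for the right-hand side of the formula, with the sign `(-1)^(ℓ(u) + ℓ(v))`.
We show `R_{u,v} = F(u, v)` for all minimal representatives `u, v` with `u⁻¹(i) ≤ v⁻¹(i)`,
comparable or not, by induction on `ℓ(v)` along Deodhar's recursion. By the tableau criterion,
such a pair satisfies `u ≤ v` iff `#{r < l : u r < i} ≥ #{r < l : v r < i}` for all `l`, that is
iff every exponent `ã_r(u, v)`, `r ∈ D̃(u, v)`, is positive; so off the Bruhat interval `F`
vanishes, like `R`. The recursion is taken at a descent `j` of `v` with `v (j + 1) < i ≤ v j`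
if there is one, and at `j = v⁻¹(i) - 1` otherwise. Multiplying by `s_j` changes `F` only
through the factors at the positions `j` and `j + 1`, so each case of the recursion becomes a
polynomial identity between these factors.
-/

variable {n : ℕ}

/-! ## Counting in intervals of naturals -/

theorem card_filter_eq_card_filter_erase_add {α : Type*} [DecidableEq α] {s : Finset α}
    (P : α → Prop) [DecidablePred P] {x : α} (hx : x ∈ s) :
    (s.filter P).card = ((s.erase x).filter P).card + if P x then 1 else 0 := by
  rw [filter_erase]
  split_ifs with h
  · exact (card_erase_add_one (mem_filter.2 ⟨hx, h⟩)).symm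
  · rw [erase_eq_of_notMem (fun hm => h (mem_filter.1 hm).2), add_zero]

theorem card_filter_add_ite_add_ite {α : Type*} [DecidableEq α] {s : Finset α} (P Q : α → Prop)
    [DecidablePred P] [DecidablePred Q] {x y : α} (hx : x ∈ s) (hy : y ∈ s) (hxy : x ≠ y)
    (hPQ : ∀ z ∈ s, z ≠ x → z ≠ y → (P z ↔ Q z)) :
    (s.filter P).card + (if Q x then 1 else 0) + (if Q y then 1 else 0)
      = (s.filter Q).card + (if P x then 1 else 0) + (if P y then 1 else 0) := by
  have hy' : y ∈ s.erase x := mem_erase.2 ⟨hxy.symm, hy⟩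
  rw [card_filter_eq_card_filter_erase_add P hx, card_filter_eq_card_filter_erase_add P hy',
    card_filter_eq_card_filter_erase_add Q hx, card_filter_eq_card_filter_erase_add Q hy',
    filter_congr (p := P) (q := Q) (fun z hz => by
      simp only [mem_erase] at hz
      exact hPQ z hz.2.2 hz.2.1 hz.1)]
  omega

theorem card_filter_lt_succ (s : Finset ℕ) (l : ℕ) :
    (s.filter (· < l + 1)).card = (s.filter (· < l)).card + if l ∈ s then 1 else 0 := by
  have : s.filter (· < l + 1) = s.filter (· < l) ∪ s.filter (· = l) := by
    rw [← filter_or]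
    exact filter_congr fun _ _ => Nat.lt_succ_iff_lt_or_eq
  rw [this, card_union_of_disjoint (disjoint_filter.2 fun _ _ h h' => h.ne h'), filter_eq']
  split_ifs <;> simp

theorem card_filter_Icc_add (P : ℕ → Prop) [DecidablePred P] {a b c : ℕ} (hab : a ≤ b + 1)
    (hbc : b ≤ c) :
    ((Icc a c).filter P).card = ((Icc a b).filter P).card + ((Icc (b + 1) c).filter P).card := by
  have : Icc a c = Icc a b ∪ Icc (b + 1) c := by
    ext
    simp only [mem_union, mem_Icc]
    omega
  rw [this, filter_union, card_union_of_disjoint (disjoint_filter_filter (disjoint_left.2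
    fun x hx hx' => by simp only [mem_Icc] at hx hx'; omega))]

/-- On an interval where `f` is strictly increasing, the points with `f k < l` form an initial
segment, so truncating the interval at `c` truncates their number at `c + 1 - a`. -/
theorem card_filter_Icc_of_strictMonoOn {α : Type*} [LinearOrder α] {f : ℕ → α} {l : α}
    {a b c : ℕ} (hf : StrictMonoOn f (Set.Icc a b)) (hc : c ≤ b) :
    ((Icc a c).filter (f · < l)).card = min (c + 1 - a) ((Icc a b).filter (f · < l)).card := by
  set t := ((Icc a b).filter (f · < l)).card
  have hseg : ∀ k ∈ Icc a b, f k < l ↔ k < a + t := by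
    intro k hk
    rw [mem_Icc] at hk
    constructor
    · intro hlt
      have : Icc a k ⊆ (Icc a b).filter (f · < l) := fun z hz => by
        rw [mem_Icc] at hz
        exact mem_filter.2 ⟨mem_Icc.2 ⟨hz.1, hz.2.trans hk.2⟩,
          (hf.monotoneOn ⟨hz.1, hz.2.trans hk.2⟩ ⟨hk.1, hk.2⟩ hz.2).trans_lt hlt⟩
      have := card_le_card this
      rw [Nat.card_Icc] at this
      omega
    · intro hlt
      by_contra hge
      have : (Icc a b).filter (f · < l) ⊆ Ico a k := fun z hz => by
        rw [mem_filter, mem_Icc] at hz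
        refine mem_Ico.2 ⟨hz.1.1, not_le.1 fun hkz => hge ?_⟩
        exact (hf.monotoneOn ⟨hk.1, hk.2⟩ hz.1 hkz).trans_lt hz.2
      have := card_le_card this
      rw [Nat.card_Ico] at this
      omega
  rw [filter_congr (fun k hk => hseg k (mem_Icc.2 ⟨(mem_Icc.1 hk).1, (mem_Icc.1 hk).2.trans hc⟩))]
  have : (Icc a c).filter (· < a + t) = Ico a (min (c + 1) (a + t)) := by
    ext; simp; omega
  rw [this, Nat.card_Ico]
  omega

theorem eq_Icc_one_card_of_succ_notMem {s : Finset ℕ} (hs : ∀ r ∈ s, 1 ≤ r)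
    (h : ∀ j, 1 ≤ j → j ∉ s → j + 1 ∉ s) : s = Icc 1 s.card := by
  have hup : ∀ j, 1 ≤ j → j ∉ s → ∀ k, j + k ∉ s := fun j hj hjs k => by
    induction k with
    | zero => exact hjs
    | succ k ih => exact h (j + k) (by omega) ih
  refine (eq_of_subset_of_card_le (fun r hr => ?_) (by simp)).symm
  rw [mem_Icc] at hr
  by_contra hrs
  have : s ⊆ Icc 1 (r - 1) := fun x hx => by
    refine mem_Icc.2 ⟨hs x hx, not_lt.1 fun hrx => hup r hr.1 hrs (x - r) ?_⟩
    rwa [Nat.add_sub_cancel' (by omega)]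
  have := card_le_card this
  simp only [Nat.card_Icc] at this
  omega

/-! ## Permutations of `{1, …, n}` -/

section PermOn

variable {u v : Equiv.Perm ℕ}

theorem IsPermOn.apply_mem_Icc_iff (hu : IsPermOn n u) {x : ℕ} :
    u x ∈ Icc 1 n ↔ x ∈ Icc 1 n := by
  refine ⟨fun h => ?_, fun hx => ?_⟩
  · by_contra hx
    exact hx (hu x hx ▸ h)
  · by_contra h
    rw [u.injective (hu (u x) h)] at h
    exact h hx

theorem IsPermOn.symm (hu : IsPermOn n u) : IsPermOn n u.symm := fun m hm => by
  rw [Equiv.symm_apply_eq, hu m hm]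

theorem IsPermOn.mul (hu : IsPermOn n u) (hv : IsPermOn n v) : IsPermOn n (u * v) :=
  fun m hm => by rw [Equiv.Perm.mul_apply, hv m hm, hu m hm]

theorem IsPermOn.ext (hu : IsPermOn n u) (hv : IsPermOn n v)
    (h : ∀ z ∈ Icc 1 n, u z = v z) : u = v := by
  ext z
  by_cases hz : z ∈ Icc 1 n
  · exact h z hz
  · rw [hu z hz, hv z hz]

theorem isPermOn_swap {a b : ℕ} (ha : a ∈ Icc 1 n) (hb : b ∈ Icc 1 n) :
    IsPermOn n (Equiv.swap a b) := fun m hm =>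
  Equiv.swap_apply_of_ne_of_ne (by rintro rfl; exact hm ha) (by rintro rfl; exact hm hb)

theorem isPermOn_sAdj {j : ℕ} (hj : 1 ≤ j) (hjn : j + 1 ≤ n) : IsPermOn n (sAdj j) :=
  isPermOn_swap (by rw [mem_Icc]; omega) (by rw [mem_Icc]; omega)

end PermOn

section Adjacent

variable {j : ℕ}

@[simp] theorem sAdj_apply_left : sAdj j j = j + 1 := Equiv.swap_apply_left _ _

@[simp] theorem sAdj_apply_right : sAdj j (j + 1) = j := Equiv.swap_apply_right _ _

theorem sAdj_apply_of_ne {r : ℕ} (h : r ≠ j) (h' : r ≠ j + 1) : sAdj j r = r :=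
  Equiv.swap_apply_of_ne_of_ne h h'

@[simp] theorem sAdj_mul_self : sAdj j * sAdj j = 1 := Equiv.swap_mul_self _ _

@[simp] theorem sAdj_symm : (sAdj j).symm = sAdj j := Equiv.symm_swap _ _

theorem mul_sAdj_symm_apply {w : Equiv.Perm ℕ} {k : ℕ} :
    (w * sAdj j).symm k = sAdj j (w.symm k) := by
  rw [Equiv.Perm.mul_def, Equiv.symm_trans_apply, sAdj_symm]

theorem sAdj_apply_mem_Icc_iff {r : ℕ} (hj : 1 ≤ j) (hjn : j + 1 ≤ n) :
    sAdj j r ∈ Icc 1 n ↔ r ∈ Icc 1 n :=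
  (isPermOn_sAdj hj hjn).apply_mem_Icc_iff

theorem sAdj_apply_lt_sAdj_apply {a b : ℕ} (hab : a < b) (h : ¬ (a = j ∧ b = j + 1)) :
    sAdj j a < sAdj j b := by
  simp only [sAdj, Equiv.swap_apply_def]
  split_ifs <;> omega

theorem sAdj_apply_le_sAdj_apply {a b : ℕ} (hb : b ≠ j + 1) (h : a ≤ b) :
    sAdj j a ≤ sAdj j b := by
  simp only [sAdj, Equiv.swap_apply_def]
  split_ifs <;> omega

theorem le_sAdj_apply {a b : ℕ} (hb : b ≠ j + 1) (h : a ≤ b) : a ≤ sAdj j b := by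
  simp only [sAdj, Equiv.swap_apply_def]
  split_ifs <;> omega

theorem sAdj_apply_lt_iff {r z : ℕ} (hr : r ≠ j + 1) : sAdj j z < r ↔ z < r := by
  simp only [sAdj, Equiv.swap_apply_def]
  split_ifs <;> omega

end Adjacent

/-! ## Inversions -/

section Inversions

variable {u : Equiv.Perm ℕ}

def invSet (n : ℕ) (u : Equiv.Perm ℕ) : Finset (ℕ × ℕ) :=
  ((Icc 1 n) ×ˢ (Icc 1 n)).filter (fun p => p.1 < p.2 ∧ u p.2 < u p.1)

theorem invNum_eq_card_invSet : invNum n u = (invSet n u).card := rfl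

theorem invNum_sAdj_mul_of_lt (hu : IsPermOn n u) {k : ℕ} (hk : 1 ≤ k) (hkn : k + 1 ≤ n)
    (h : u.symm k < u.symm (k + 1)) : invNum n (sAdj k * u) = invNum n u + 1 := by
  have hmem : ∀ m ∈ Icc 1 n, u.symm m ∈ Icc 1 n := fun m hm => hu.symm.apply_mem_Icc_iff.2 hm
  have hset : invSet n (sAdj k * u) = insert (u.symm k, u.symm (k + 1)) (invSet n u) := by
    ext ⟨x, y⟩
    have hx : u x = k + 1 → x = u.symm (k + 1) := fun e => by rw [← e, Equiv.symm_apply_apply]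
    have hy : u y = k → y = u.symm k := fun e => by rw [← e, Equiv.symm_apply_apply]
    simp only [invSet, mem_insert, mem_filter, mem_product, Prod.mk.injEq]
    simp only [Equiv.Perm.mul_apply, Equiv.eq_symm_apply, sAdj, Equiv.swap_apply_def]
    constructor
    · rintro ⟨hxy, hlt, hinv⟩
      by_cases e : u x = k ∧ u y = k + 1
      · exact Or.inl e
      · right; refine ⟨hxy, hlt, ?_⟩
        split_ifs at hinv <;> omega
    · rintro (⟨e1, e2⟩ | ⟨hxy, hlt, hinv⟩)
      · have ex : x = u.symm k := by rw [← e1, Equiv.symm_apply_apply]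
        have ey : y = u.symm (k + 1) := by rw [← e2, Equiv.symm_apply_apply]
        refine ⟨⟨ex ▸ hmem k (by rw [mem_Icc]; omega), ey ▸ hmem _ (by rw [mem_Icc]; omega)⟩,
          by omega, ?_⟩
        simp [e1, e2]
      · refine ⟨hxy, hlt, ?_⟩
        split_ifs <;> omega
  rw [invNum_eq_card_invSet, invNum_eq_card_invSet, hset, card_insert_of_notMem]
  simp only [invSet, mem_filter, not_and, Equiv.apply_symm_apply]
  intro _ _
  omega

theorem invNum_sAdj_mul_of_gt (hu : IsPermOn n u) {k : ℕ} (hk : 1 ≤ k) (hkn : k + 1 ≤ n)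
    (h : u.symm (k + 1) < u.symm k) : invNum n (sAdj k * u) + 1 = invNum n u := by
  have h' : (sAdj k * u).symm k < (sAdj k * u).symm (k + 1) := by
    simpa [Equiv.Perm.mul_def, Equiv.symm_trans_apply] using h
  have := invNum_sAdj_mul_of_lt ((isPermOn_sAdj hk hkn).mul hu) hk hkn h'
  rw [← mul_assoc, sAdj_mul_self, one_mul] at this
  exact this.symm

theorem invNum_inv (hu : IsPermOn n u) : invNum n u⁻¹ = invNum n u := by
  refine card_nbij' (fun p => (u.symm p.2, u.symm p.1)) (fun p => (u p.2, u p.1)) ?_ ?_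
    (fun _ _ => by simp) (fun _ _ => by simp)
  · rintro ⟨x, y⟩ hm
    simp only [coe_filter, Set.mem_ofPred_eq, mem_product, Equiv.Perm.inv_def] at hm ⊢
    obtain ⟨⟨hx, hy⟩, hxy, hlt⟩ := hm
    exact ⟨⟨hu.symm.apply_mem_Icc_iff.2 hy, hu.symm.apply_mem_Icc_iff.2 hx⟩, hlt,
      by simpa using hxy⟩
  · rintro ⟨x, y⟩ hm
    simp only [coe_filter, Set.mem_ofPred_eq, mem_product, Equiv.Perm.inv_def] at hm ⊢
    obtain ⟨⟨hx, hy⟩, hxy, hlt⟩ := hm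
    exact ⟨⟨hu.apply_mem_Icc_iff.2 hy, hu.apply_mem_Icc_iff.2 hx⟩, hlt, by simpa using hxy⟩

theorem invNum_mul_sAdj_of_lt (hu : IsPermOn n u) {j : ℕ} (hj : 1 ≤ j) (hjn : j + 1 ≤ n)
    (h : u j < u (j + 1)) : invNum n (u * sAdj j) = invNum n u + 1 := by
  have hinv : (u * sAdj j)⁻¹ = sAdj j * u⁻¹ := by
    rw [mul_inv_rev, Equiv.Perm.inv_def (sAdj j), sAdj_symm]
  have := invNum_sAdj_mul_of_lt hu.symm hj hjn (by simpa using h)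
  rwa [← Equiv.Perm.inv_def, ← hinv, invNum_inv (hu.mul (isPermOn_sAdj hj hjn)),
    invNum_inv hu] at this

theorem invNum_mul_sAdj_of_gt (hu : IsPermOn n u) {j : ℕ} (hj : 1 ≤ j) (hjn : j + 1 ≤ n)
    (h : u (j + 1) < u j) : invNum n (u * sAdj j) + 1 = invNum n u := by
  have := invNum_mul_sAdj_of_lt (hu.mul (isPermOn_sAdj hj hjn)) hj hjn (by simpa using h)
  rwa [mul_assoc, sAdj_mul_self, mul_one, eq_comm] at this

/-- Sorting the pair `(t c, t d)` matches the inversions of `u * t` with the pairs that are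
inversions of exactly one of `u` and `t`. -/
theorem card_invSet_mul_of_involutive {t : Equiv.Perm ℕ} (ht : ∀ z, t (t z) = z)
    (htI : ∀ z ∈ Icc 1 n, t z ∈ Icc 1 n) :
    (invSet n (u * t)).card = (invSet n u \ invSet n t).card + (invSet n t \ invSet n u).card := by
  let σ : ℕ × ℕ → ℕ × ℕ := fun p => if t p.1 < t p.2 then (t p.1, t p.2) else (t p.2, t p.1)
  have hσσ : ∀ c d, c < d → σ (σ (c, d)) = (c, d) := by
    intro c d hcd
    by_cases h : t c < t d
    · simp [σ, h, ht, hcd]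
    · simp [σ, h, ht, not_lt.2 hcd.le]
  have hne : ∀ {c d}, c < d → t c ≠ t d := fun hcd e => hcd.ne (t.injective e)
  rw [← card_union_of_disjoint disjoint_sdiff_sdiff]
  refine card_nbij' σ σ ?_ ?_ ?_ ?_
  · rintro ⟨c, d⟩ hm
    simp only [mem_coe, invSet, mem_filter, mem_product] at hm
    rw [Equiv.Perm.mul_apply, Equiv.Perm.mul_apply] at hm
    obtain ⟨⟨hc, hd⟩, hcd, hlt⟩ := hm
    simp only [mem_coe, invSet, mem_union, mem_sdiff, mem_filter, mem_product, σ]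
    rcases lt_or_gt_of_ne (hne hcd) with h | h
    · simp only [if_pos h, ht]
      exact Or.inl ⟨⟨⟨htI c hc, htI d hd⟩, h, hlt⟩, fun hF => by omega⟩
    · simp only [if_neg (not_lt.2 h.le), ht]
      exact Or.inr ⟨⟨⟨htI d hd, htI c hc⟩, h, hcd⟩, fun hS => by omega⟩
  · rintro ⟨c, d⟩ hm
    simp only [mem_coe, invSet, mem_union, mem_sdiff, mem_filter, mem_product] at hm
    simp only [mem_coe, invSet, mem_filter, mem_product, σ]
    rcases hm with ⟨⟨⟨hc, hd⟩, hcd, hlt⟩, hnF⟩ | ⟨⟨⟨hc, hd⟩, hcd, hlt⟩, hnS⟩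
    · have hord : t c < t d := by
        rcases lt_or_gt_of_ne (hne hcd) with h | h
        · exact h
        · exact absurd ⟨⟨hc, hd⟩, hcd, h⟩ hnF
      simp only [if_pos hord, Equiv.Perm.mul_apply, ht]
      exact ⟨⟨htI c hc, htI d hd⟩, hord, hlt⟩
    · have hord : u c < u d := by
        rcases lt_or_gt_of_ne (fun e => hcd.ne (u.injective e)) with h | h
        · exact h
        · exact absurd ⟨⟨hc, hd⟩, hcd, h⟩ hnS
      simp only [if_neg (not_lt.2 hlt.le), Equiv.Perm.mul_apply, ht]
      exact ⟨⟨htI d hd, htI c hc⟩, hlt, hord⟩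
  · rintro ⟨c, d⟩ hm
    simp only [mem_coe, invSet, mem_filter] at hm
    exact hσσ c d hm.2.1
  · rintro ⟨c, d⟩ hm
    simp only [mem_coe, invSet, mem_union, mem_sdiff, mem_filter] at hm
    exact hσσ c d (by rcases hm with ⟨⟨_, h, _⟩, _⟩ | ⟨⟨_, h, _⟩, _⟩ <;> exact h)

theorem invSet_swap {x y : ℕ} (hx : 1 ≤ x) (hxy : x < y) (hy : y ≤ n) :
    invSet n (Equiv.swap x y) =
      (Ioc x y).image (fun z => (x, z)) ∪ (Ioo x y).image (fun z => (z, y)) := by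
  ext ⟨c, d⟩
  simp only [invSet, mem_filter, mem_product, mem_union, mem_image, mem_Ioc, mem_Ioo,
    Prod.mk.injEq, mem_Icc]
  simp only [Equiv.swap_apply_def]
  constructor
  · rintro ⟨-, hcd, hlt⟩
    split_ifs at hlt <;> first
      | exact Or.inl ⟨d, ⟨by omega, by omega⟩, by omega, rfl⟩
      | exact Or.inr ⟨c, ⟨by omega, by omega⟩, rfl, by omega⟩
  · rintro (⟨z, ⟨hz1, hz2⟩, rfl, rfl⟩ | ⟨z, ⟨hz1, hz2⟩, rfl, rfl⟩)
    · refine ⟨⟨⟨hx, by omega⟩, by omega, by omega⟩, hz1, ?_⟩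
      split_ifs <;> omega
    · refine ⟨⟨⟨by omega, by omega⟩, by omega, hy⟩, hz2, ?_⟩
      split_ifs <;> omega

theorem card_invSet_swap {x y : ℕ} (hx : 1 ≤ x) (hxy : x < y) (hy : y ≤ n) :
    (invSet n (Equiv.swap x y)).card = 2 * (y - x) - 1 := by
  rw [invSet_swap hx hxy hy, card_union_of_disjoint,
    card_image_of_injective _ (Prod.mk_right_injective x),
    card_image_of_injective _ (Prod.mk_left_injective y), Nat.card_Ioc, Nat.card_Ioo]
  · omega
  · rw [disjoint_left]
    simp only [mem_image, mem_Ioc, mem_Ioo, not_exists, not_and]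
    rintro _ ⟨z, ⟨hz, -⟩, rfl⟩ w ⟨hw, -⟩ h
    simp only [Prod.mk.injEq] at h
    omega

theorem card_invSet_inter_invSet_swap_le {x y : ℕ} (hx : 1 ≤ x) (hxy : x < y) (hy : y ≤ n)
    (h : u x < u y) : (invSet n u ∩ invSet n (Equiv.swap x y)).card ≤ y - x - 1 := by
  rw [← Nat.card_Ioo]
  refine card_le_card_of_injOn (fun q => if q.1 = x then q.2 else q.1) ?_ ?_
  · rintro ⟨c, d⟩ hm
    rw [coe_inter, Set.mem_inter_iff, mem_coe, mem_coe, invSet_swap hx hxy hy] at hm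
    simp only [invSet, mem_filter, mem_union, mem_image, mem_Ioc, mem_Ioo, Prod.mk.injEq] at hm
    obtain ⟨⟨-, -, hlt⟩, ⟨z, ⟨hz1, hz2⟩, rfl, rfl⟩ | ⟨z, ⟨hz1, hz2⟩, rfl, rfl⟩⟩ := hm
    · have hzy : z ≠ y := by rintro rfl; omega
      simp only [mem_coe, mem_Ioo, ↓reduceIte]
      omega
    · simp only [mem_coe, mem_Ioo, if_neg hz1.ne']
      omega
  · rintro ⟨c, d⟩ hm ⟨c', d'⟩ hm' he
    rw [mem_coe, mem_inter, invSet_swap hx hxy hy] at hm hm'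
    simp only [invSet, mem_filter, mem_union, mem_image, mem_Ioc, mem_Ioo, Prod.mk.injEq] at hm hm'
    obtain ⟨⟨-, -, hlt⟩, ⟨z, ⟨hz1, -⟩, rfl, rfl⟩ | ⟨z, ⟨hz1, -⟩, rfl, rfl⟩⟩ := hm <;>
      obtain ⟨⟨-, -, hlt'⟩, ⟨w, ⟨hw1, -⟩, rfl, rfl⟩ | ⟨w, ⟨hw1, -⟩, rfl, rfl⟩⟩ := hm' <;>
      simp only at he <;> split_ifs at he <;> first | omega | (subst he; first | rfl | omega)

/-- The `2 (y - x) - 1` inversions of the transposition outnumber twice those it shares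
with `u`. -/
theorem invNum_lt_mul_swap {x y : ℕ} (hx : 1 ≤ x) (hxy : x < y) (hy : y ≤ n) (h : u x < u y) :
    invNum n u < invNum n (u * Equiv.swap x y) := by
  have hinv : ∀ z, Equiv.swap x y (Equiv.swap x y z) = z := Equiv.swap_apply_self x y
  have hI : ∀ z ∈ Icc 1 n, Equiv.swap x y z ∈ Icc 1 n := fun z hz =>
    (isPermOn_swap (n := n) (by rw [mem_Icc]; omega)
      (by rw [mem_Icc]; omega)).apply_mem_Icc_iff.2 hz
  have hcard := card_invSet_mul_of_involutive (u := u) hinv hI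
  have hS := card_sdiff_add_card_inter (invSet n u) (invSet n (Equiv.swap x y))
  have hF := card_sdiff_add_card_inter (invSet n (Equiv.swap x y)) (invSet n u)
  rw [inter_comm] at hF
  have := card_invSet_inter_invSet_swap_le hx hxy hy h
  have := card_invSet_swap (n := n) hx hxy hy
  rw [invNum_eq_card_invSet, invNum_eq_card_invSet]
  omega

end Inversions

/-! ## Bruhat order and the dominance criterion -/

section Bruhat

variable {u v w : Equiv.Perm ℕ}

theorem BruhatLE.invNum_le (h : BruhatLE n u v) : invNum n u ≤ invNum n v := by
  induction h with
  | refl => exact le_rfl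
  | tail _ hstep ih => exact ih.trans hstep.1.le

theorem BruhatLE.invNum_lt (h : BruhatLE n u v) (hne : u ≠ v) : invNum n u < invNum n v := by
  obtain rfl | htg := Relation.reflTransGen_iff_eq_or_transGen.1 h
  · exact absurd rfl hne
  · clear h hne
    induction htg with
    | single hstep => exact hstep.1
    | tail _ hstep ih => exact ih.trans hstep.1

def upCount (n : ℕ) (w : Equiv.Perm ℕ) (k l : ℕ) : ℕ :=
  ((Icc 1 n).filter (fun z => z ≤ l ∧ k ≤ w z)).card

def DomLE (n : ℕ) (u v : Equiv.Perm ℕ) : Prop := ∀ k l, upCount n u k l ≤ upCount n v k l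

theorem upCount_mul_swap (u : Equiv.Perm ℕ) {x y : ℕ} (hx : x ∈ Icc 1 n) (hy : y ∈ Icc 1 n)
    (hxy : x ≠ y) (k l : ℕ) :
    upCount n u k l + (if y ≤ l ∧ k ≤ u x then 1 else 0) + (if x ≤ l ∧ k ≤ u y then 1 else 0)
      = upCount n (u * Equiv.swap x y) k l
        + (if x ≤ l ∧ k ≤ u x then 1 else 0) + (if y ≤ l ∧ k ≤ u y then 1 else 0) := by
  have hreindex : upCount n (u * Equiv.swap x y) k l =
      ((Icc 1 n).filter (fun z => Equiv.swap x y z ≤ l ∧ k ≤ u z)).card := by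
    have hI := fun z => (isPermOn_swap hx hy).apply_mem_Icc_iff (x := z)
    refine card_nbij' (Equiv.swap x y) (Equiv.swap x y) ?_ ?_ ?_ ?_ <;> intro z hz <;>
      simp only [mem_coe, mem_filter] at hz ⊢ <;>
      simp only [Equiv.Perm.mul_apply, Equiv.swap_apply_self] at hz ⊢
    · exact ⟨(hI _).2 hz.1, hz.2⟩
    · exact ⟨(hI _).2 hz.1, hz.2⟩
  have := card_filter_add_ite_add_ite (fun z => z ≤ l ∧ k ≤ u z)
    (fun z => Equiv.swap x y z ≤ l ∧ k ≤ u z) hx hy hxy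
    (fun z _ hzx hzy => by rw [Equiv.swap_apply_of_ne_of_ne hzx hzy])
  simp only [Equiv.swap_apply_left, Equiv.swap_apply_right] at this
  rw [hreindex]
  exact this

theorem domLE_mul_swap {x y : ℕ} (hx : 1 ≤ x) (hxy : x < y) (hy : y ≤ n) (h : u x < u y) :
    DomLE n u (u * Equiv.swap x y) := fun k l => by
  have := upCount_mul_swap (n := n) u (by rw [mem_Icc]; omega) (by rw [mem_Icc]; omega) hxy.ne k l
  split_ifs at this <;> omega

theorem BruhatLE.domLE (h : BruhatLE n u v) : DomLE n u v := by
  induction h with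
  | refl => exact fun _ _ => le_rfl
  | @tail b c _ hstep ih =>
    obtain ⟨hlen, x, y, hx, hxy, hy, rfl⟩ := hstep
    have hb : b x < b y := by
      by_contra hge
      have hlt : (b * Equiv.swap x y) x < (b * Equiv.swap x y) y := by
        simp only [Equiv.Perm.mul_apply, Equiv.swap_apply_left, Equiv.swap_apply_right]
        exact lt_of_le_of_ne (not_lt.1 hge) fun e => hxy.ne (b.injective e).symm
      have := invNum_lt_mul_swap (n := n) hx hxy hy hlt
      rw [mul_assoc, Equiv.swap_mul_self, mul_one] at this
      omega
    exact fun k l => (ih k l).trans (domLE_mul_swap hx hxy hy hb k l)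

theorem upCount_eq_add_card (w : Equiv.Perm ℕ) {k c : ℕ} (l : ℕ) (hk : k ≤ c + 1) :
    upCount n w k l = upCount n w (c + 1) l +
      ((Icc 1 n).filter (fun z => z ≤ l ∧ k ≤ w z ∧ w z ≤ c)).card := by
  rw [upCount, upCount, ← card_union_of_disjoint]
  · congr 1
    ext z
    simp only [mem_filter, mem_union, ← and_or_left]
    exact and_congr_right fun _ => by omega
  · rw [disjoint_filter]
    intro z _ h h'
    omega

theorem DomLE.apply_lt_of_eqOn (hdom : DomLE n u v) {d : ℕ} (hdI : d ∈ Icc 1 n)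
    (hagree : ∀ z < d, u z = v z) (hne : u d ≠ v d) : u d < v d := by
  refine lt_of_le_of_ne (not_lt.1 fun hlt => ?_) hne
  have hsplit := fun w : Equiv.Perm ℕ =>
    card_filter_eq_card_filter_erase_add (fun z => z ≤ d ∧ u d ≤ w z) hdI
  have hrest : ((Icc 1 n).erase d).filter (fun z => z ≤ d ∧ u d ≤ u z) =
      ((Icc 1 n).erase d).filter (fun z => z ≤ d ∧ u d ≤ v z) :=
    filter_congr fun z hz => by
      have := fun h : z ≤ d => hagree z (lt_of_le_of_ne h (mem_erase.1 hz).1)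
      constructor <;> rintro ⟨hzd, h⟩ <;> refine ⟨hzd, ?_⟩ <;> have e := this hzd <;> omega
  have := hdom (u d) d
  rw [upCount, upCount, hsplit u, hsplit v, hrest] at this
  simp only [le_refl, and_self, ↓reduceIte, not_le.2 hlt, and_false] at this
  omega

/-- Only the ranks in the rectangle `d ≤ l < b`, `u d < k ≤ u b` grow, and there the minimality
of `b` bounds them by those of `v`. -/
theorem DomLE.mul_swap (hdom : DomLE n u v) {d b : ℕ} (hdI : d ∈ Icc 1 n) (hbn : b ≤ n)
    (hagree : ∀ z < d, u z = v z) (hdb : d < b) (hub : u d < u b) (hubv : u b ≤ v d)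
    (hbmin : ∀ z, d < z ∧ u d < u z ∧ u z ≤ v d → b ≤ z) :
    DomLE n (u * Equiv.swap d b) v := fun k l => by
  have hkey := upCount_mul_swap u hdI (mem_Icc.2 ⟨by simp at hdI; omega, hbn⟩) hdb.ne k l
  by_cases hrect : d ≤ l ∧ l < b ∧ u d < k ∧ k ≤ u b
  swap
  · have := hdom k l
    split_ifs at hkey <;> omega
  obtain ⟨h1, h2, h3, h4⟩ := hrect
  have hsu := upCount_eq_add_card (n := n) u l (c := v d) (k := k) (by omega)
  have hsv := upCount_eq_add_card (n := n) v l (c := v d) (k := k) (by omega)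
  have hcu : (Icc 1 n).filter (fun z => z ≤ l ∧ k ≤ u z ∧ u z ≤ v d) =
      (Icc 1 n).filter (fun z => z < d ∧ k ≤ v z ∧ v z ≤ v d) := by
    refine filter_congr fun z hz => ⟨fun ⟨hzl, hk, hv⟩ => ?_, fun ⟨hzd, hk, hv⟩ => ?_⟩
    · have hzd : z < d := by
        by_contra hzd
        have : b ≤ z := hbmin z ⟨lt_of_le_of_ne (not_lt.1 hzd) (by rintro rfl; omega),
          by omega, hv⟩
        omega
      rw [← hagree z hzd]
      exact ⟨hzd, hk, hv⟩
    · rw [← hagree z hzd] at hk hv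
      exact ⟨by omega, hk, hv⟩
  have hcv : ((Icc 1 n).filter (fun z => z < d ∧ k ≤ v z ∧ v z ≤ v d)).card + 1 ≤
      ((Icc 1 n).filter (fun z => z ≤ l ∧ k ≤ v z ∧ v z ≤ v d)).card := by
    rw [← card_insert_of_notMem (a := d) (by simp)]
    refine card_le_card (insert_subset (mem_filter.2 ⟨hdI, h1, by omega, le_rfl⟩) fun z hz => ?_)
    simp only [mem_filter] at hz ⊢
    exact ⟨hz.1, by omega, hz.2.2⟩
  rw [if_neg (by omega), if_pos ⟨h1, h4⟩, if_neg (by omega), if_neg (by omega)] at hkey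
  rw [hcu] at hsu
  have := hdom (v d + 1) l
  omega

/-- Swap the first position `d` where `u` and `v` differ with the first later position `b`
such that `u d < u b ≤ v d`. -/
theorem DomLE.exists_swap (hu : IsPermOn n u) (hv : IsPermOn n v) (hdom : DomLE n u v)
    (hne : u ≠ v) :
    ∃ d b, 1 ≤ d ∧ d < b ∧ b ≤ n ∧ u d < u b ∧ DomLE n (u * Equiv.swap d b) v := by
  classical
  have hex : ∃ z, z ∈ Icc 1 n ∧ u z ≠ v z := by
    by_contra! h
    exact hne (hu.ext hv h)
  obtain ⟨d, ⟨hdI, hdne⟩, hdmin⟩ : ∃ d, (d ∈ Icc 1 n ∧ u d ≠ v d) ∧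
      ∀ z < d, ¬ (z ∈ Icc 1 n ∧ u z ≠ v z) :=
    ⟨Nat.find hex, Nat.find_spec hex, fun _ => Nat.find_min hex⟩
  have hagree : ∀ z < d, u z = v z := fun z hz => by
    by_cases hzI : z ∈ Icc 1 n
    · by_contra h
      exact hdmin z hz ⟨hzI, h⟩
    · rw [hu z hzI, hv z hzI]
  have hdlt := hdom.apply_lt_of_eqOn hdI hagree hdne
  have hw : d < u.symm (v d) ∧ u d < u (u.symm (v d)) ∧ u (u.symm (v d)) ≤ v d := by
    refine ⟨lt_of_le_of_ne (not_lt.1 fun hlt => ?_) fun e => ?_, by simpa, by simp⟩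
    · have := v.injective ((Equiv.apply_symm_apply u (v d)).symm.trans (hagree _ hlt))
      omega
    · exact hdne (u.eq_symm_apply.1 e)
  have hbex : ∃ z, d < z ∧ u d < u z ∧ u z ≤ v d := ⟨_, hw⟩
  obtain ⟨b, ⟨hdb, hub, hubv⟩, hbmin⟩ : ∃ b, (d < b ∧ u d < u b ∧ u b ≤ v d) ∧
      ∀ z, d < z ∧ u d < u z ∧ u z ≤ v d → b ≤ z :=
    ⟨Nat.find hbex, Nat.find_spec hbex, fun _ => Nat.find_min' hbex⟩
  have hbn : b ≤ n := (hbmin _ hw).trans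
    (mem_Icc.1 (hu.symm.apply_mem_Icc_iff.2 (hv.apply_mem_Icc_iff.2 hdI))).2
  exact ⟨d, b, (mem_Icc.1 hdI).1, hdb, hbn, hub,
    hdom.mul_swap hdI hbn hagree hdb hub hubv hbmin⟩

theorem invNum_le_mul_self (u : Equiv.Perm ℕ) : invNum n u ≤ n * n :=
  (card_filter_le _ _).trans (by simp)

theorem DomLE.bruhatLE (hu : IsPermOn n u) (hv : IsPermOn n v) (h : DomLE n u v) :
    BruhatLE n u v := by
  induction hN : n * n - invNum n u using Nat.strong_induction_on generalizing u with
  | _ N ih =>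
  by_cases huv : u = v
  · exact huv ▸ .refl
  obtain ⟨d, b, hd, hdb, hbn, hub, h'⟩ := h.exists_swap hu hv huv
  have hlt := invNum_lt_mul_swap hd hdb hbn hub
  have := invNum_le_mul_self (n := n) (u * Equiv.swap d b)
  exact .head ⟨hlt, d, b, hd, hdb, hbn, rfl⟩
    (ih _ (by omega) (hu.mul (isPermOn_swap (by rw [mem_Icc]; omega) (by rw [mem_Icc]; omega)))
      h' rfl)

theorem upCount_add_posLT (hw : IsPermOn n w) {k : ℕ} (hk : 1 ≤ k) (l : ℕ) :
    upCount n w k l + posLT n (k - 1) (l + 1) w = ((Icc 1 n).filter (· ≤ l)).card := by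
  rw [upCount, posLT, ← card_union_of_disjoint]
  · congr 1
    ext z
    simp only [mem_union, mem_filter, mem_Icc]
    have := hw.apply_mem_Icc_iff (x := z)
    simp only [mem_Icc] at this
    omega
  · rw [disjoint_filter]
    intro z _ h h'
    simp only [mem_Icc] at h'
    omega

/-- The tableau criterion for the Bruhat order on `S_n`. -/
theorem bruhatLE_iff_posLT_le (hu : IsPermOn n u) (hv : IsPermOn n v) :
    BruhatLE n u v ↔ ∀ c l, posLT n c l v ≤ posLT n c l u := by
  constructor
  · intro h c l
    obtain _ | l := l
    · simp [posLT]
    · have hu' := upCount_add_posLT hu (Nat.le_add_left 1 c) l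
      have hv' := upCount_add_posLT hv (Nat.le_add_left 1 c) l
      have := h.domLE (c + 1) l
      simp only [Nat.add_sub_cancel] at hu' hv'
      omega
  · intro h
    refine DomLE.bruhatLE hu hv fun k l => ?_
    obtain _ | k := k
    · simp only [upCount, zero_le, and_true, le_refl]
    · have hu' := upCount_add_posLT hu (Nat.le_add_left 1 k) l
      have hv' := upCount_add_posLT hv (Nat.le_add_left 1 k) l
      have := h k (l + 1)
      simp only [Nat.add_sub_cancel] at hu' hv'
      omega

end Bruhat

/-! ## Positions of small values -/

section LowPos

variable {m j l r : ℕ} {u v w : Equiv.Perm ℕ}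

/-- The set `w⁻¹([m])` of positions of `w` holding a value in `{1, …, m}`. -/
def lowPos (n m : ℕ) (w : Equiv.Perm ℕ) : Finset ℕ :=
  (Icc 1 n).filter (fun r => w r ∈ Icc 1 m)

theorem mem_lowPos : r ∈ lowPos n m w ↔ r ∈ Icc 1 n ∧ w r ∈ Icc 1 m := mem_filter

theorem IsPermOn.mem_lowPos_iff (hw : IsPermOn n w)
    (hr : r ∈ Icc 1 n) : r ∈ lowPos n m w ↔ w r ≤ m := by
  have := hw.apply_mem_Icc_iff.2 hr
  simp only [mem_lowPos, mem_Icc] at this hr ⊢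
  omega

theorem symm_ne_of_mem_lowPos {i : ℕ} (hr : r ∈ lowPos n (i - 1) w) : w.symm i ≠ r := by
  rintro rfl
  simp only [mem_lowPos, Equiv.apply_symm_apply, mem_Icc] at hr
  omega

theorem IsPermOn.apply_succ_lt_of_notMem_lowPos (hw : IsPermOn n w) (hj : 1 ≤ j)
    (hjw : j ∉ lowPos n m w) (hj1w : j + 1 ∈ lowPos n m w) : w (j + 1) < w j := by
  have hjn := (mem_Icc.1 (mem_lowPos.1 hj1w).1).2
  rw [hw.mem_lowPos_iff (by rw [mem_Icc]; omega)] at hjw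
  rw [hw.mem_lowPos_iff (by rw [mem_Icc]; omega)] at hj1w
  omega

theorem IsPermOn.apply_succ_lt_of_symm_eq {i : ℕ} (hw : IsPermOn n w) (hj : 1 ≤ j)
    (hjn : j + 1 ≤ n) (hjw : j ∉ lowPos n (i - 1) w) (hP : w.symm i = j + 1) :
    w (j + 1) < w j := by
  have hwj1 : w (j + 1) = i := by rw [← hP, Equiv.apply_symm_apply]
  have : w j ≠ i := fun e => by
    rw [← hwj1] at e
    exact absurd (w.injective e) (by omega)
  rw [hw.mem_lowPos_iff (by rw [mem_Icc]; omega)] at hjw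
  omega

theorem card_lowPos (hw : IsPermOn n w) (hm : m ≤ n) :
    (lowPos n m w).card = m := by
  refine (card_nbij' w w.symm (fun r hr => (mem_lowPos.1 hr).2) (fun k hk => ?_)
    (fun r _ => by simp) (fun k _ => by simp)).trans (by simp)
  have := hw.symm.apply_mem_Icc_iff (x := k)
  simp only [coe_Icc, Set.mem_Icc, mem_coe, mem_lowPos, mem_Icc, Equiv.apply_symm_apply]
    at hk this ⊢
  omega

theorem posLT_eq_card_filter_lowPos : posLT n m l w = ((lowPos n m w).filter (· < l)).card := by
  rw [posLT, lowPos, filter_filter]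
  simp only [and_comm]

theorem posLT_succ : posLT n m (l + 1) w = posLT n m l w + if l ∈ lowPos n m w then 1 else 0 := by
  rw [posLT_eq_card_filter_lowPos, posLT_eq_card_filter_lowPos, card_filter_lt_succ]

theorem lowPos_eq_of_lowPos_eq_Icc (hu : IsPermOn n u) (hm : m ≤ n)
    (hB : lowPos n m v = Icc 1 m) (hle : posLT n m (m + 1) v ≤ posLT n m (m + 1) u) :
    lowPos n m u = lowPos n m v := by
  rw [posLT_eq_card_filter_lowPos, posLT_eq_card_filter_lowPos, hB,
    filter_true_of_mem fun r hr => by simp at hr; omega, Nat.card_Icc] at hle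
  have hcard := card_lowPos hu hm
  have hAf : (lowPos n m u).filter (· < m + 1) = lowPos n m u :=
    eq_of_subset_of_card_le (filter_subset _ _) (by omega)
  rw [hB]
  refine eq_of_subset_of_card_le (fun r hr => ?_) (by rw [Nat.card_Icc]; omega)
  rw [← hAf, mem_filter] at hr
  have := (mem_lowPos.1 hr.1).1
  simp only [mem_Icc] at this ⊢
  omega

theorem mem_lowPos_mul_sAdj (hj : 1 ≤ j) (hjn : j + 1 ≤ n) :
    r ∈ lowPos n m (w * sAdj j) ↔ sAdj j r ∈ lowPos n m w := by
  rw [mem_lowPos, mem_lowPos, sAdj_apply_mem_Icc_iff hj hjn, Equiv.Perm.mul_apply]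

theorem posLT_mul_sAdj_of_ne (hj : 1 ≤ j) (hjn : j + 1 ≤ n) (hr : r ≠ j + 1) :
    posLT n m r (w * sAdj j) = posLT n m r w := by
  rw [posLT_eq_card_filter_lowPos, posLT_eq_card_filter_lowPos]
  refine card_nbij' (sAdj j) (sAdj j) ?_ ?_ (fun z _ => ?_) (fun z _ => ?_)
  · intro z hz
    simp only [coe_filter, Set.mem_ofPred_eq, mem_lowPos_mul_sAdj hj hjn] at hz ⊢
    exact ⟨hz.1, (sAdj_apply_lt_iff hr).2 hz.2⟩
  · intro z hz
    simp only [coe_filter, Set.mem_ofPred_eq, mem_lowPos_mul_sAdj hj hjn] at hz ⊢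
    rw [← Equiv.Perm.mul_apply, sAdj_mul_self, Equiv.Perm.one_apply]
    exact ⟨hz.1, (sAdj_apply_lt_iff hr).2 hz.2⟩
  · exact Equiv.swap_apply_self _ _ _
  · exact Equiv.swap_apply_self _ _ _

theorem posLT_mul_sAdj_succ (hj : 1 ≤ j) (hjn : j + 1 ≤ n) :
    posLT n m (j + 1) (w * sAdj j) = posLT n m j w + if j + 1 ∈ lowPos n m w then 1 else 0 := by
  rw [posLT_succ, posLT_mul_sAdj_of_ne hj hjn (by omega)]
  simp only [mem_lowPos_mul_sAdj hj hjn, sAdj_apply_left]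

theorem posLT_eq_card_filter_symm (hw : IsPermOn n w) {c : ℕ} (hc : c ≤ n) :
    posLT n c l w = ((Icc 1 c).filter (fun k => w.symm k < l)).card := by
  refine card_nbij' w w.symm ?_ ?_ (fun z _ => by simp) (fun z _ => by simp)
  · intro z hz
    simp only [coe_filter, Set.mem_ofPred_eq] at hz ⊢
    exact ⟨hz.2.2, by simpa using hz.2.1⟩
  · intro k hk
    simp only [coe_filter, Set.mem_ofPred_eq, mem_Icc] at hk ⊢
    have := hw.symm.apply_mem_Icc_iff (x := k)
    simp only [mem_Icc, Equiv.apply_symm_apply] at this ⊢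
    omega

theorem posLT_succ_left (hw : IsPermOn n w) (hm : m + 1 ≤ n) :
    posLT n (m + 1) l w = posLT n m l w + if w.symm (m + 1) < l then 1 else 0 := by
  have : Icc 1 (m + 1) = insert (m + 1) (Icc 1 m) := by ext; simp; omega
  rw [posLT_eq_card_filter_symm hw hm, posLT_eq_card_filter_symm hw (by omega), this,
    filter_insert]
  split_ifs with h
  · rw [card_insert_of_notMem (by simp)]
  · rfl

end LowPos

/-! ## Minimal coset representatives -/

section MinReps

variable {E : Set ℕ} {j : ℕ} {w : Equiv.Perm ℕ}

theorem minReps_iff (hw : IsPermOn n w) :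
    MinReps n E w ↔ ∀ k, 1 ≤ k → k + 1 ≤ n → k ∉ E → w.symm k < w.symm (k + 1) := by
  refine ⟨fun h k hk hkn hkE => ?_, fun h k hk hkn hkE => ?_⟩
  · refine lt_of_le_of_ne (not_lt.1 fun hlt => ?_) fun e => by simpa using w.symm.injective e
    have := invNum_sAdj_mul_of_gt hw hk hkn hlt
    have := h k hk (by omega) hkE
    omega
  · rw [invNum_sAdj_mul_of_lt hw hk (by omega) (h k hk (by omega) hkE)]
    omega

theorem MinReps.mul_sAdj_iff (hw : IsPermOn n w) (hmin : MinReps n E w) (hj : 1 ≤ j)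
    (hjn : j + 1 ≤ n) : MinReps n E (w * sAdj j) ↔ ¬ (w (j + 1) = w j + 1 ∧ w j ∉ E) := by
  have hws := hw.mul (isPermOn_sAdj hj hjn)
  rw [minReps_iff hws]
  rw [minReps_iff hw] at hmin
  simp only [mul_sAdj_symm_apply]
  constructor
  · rintro h ⟨hcons, hE⟩
    have hwj := (hw.apply_mem_Icc_iff (x := j)).2 (by rw [mem_Icc]; omega)
    have hwj1 := (hw.apply_mem_Icc_iff (x := j + 1)).2 (by rw [mem_Icc]; omega)
    simp only [mem_Icc] at hwj hwj1
    have := h (w j) hwj.1 (by omega) hE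
    rw [← hcons] at this
    simp at this
  · intro h k hk hkn hkE
    refine sAdj_apply_lt_sAdj_apply (hmin k hk hkn hkE) fun ⟨e1, e2⟩ => h ⟨?_, ?_⟩
    · rw [← e2, ← e1, Equiv.apply_symm_apply, Equiv.apply_symm_apply]
    · rwa [← e1, Equiv.apply_symm_apply]

theorem MinReps.mul_sAdj_of_gt (hw : IsPermOn n w) (hmin : MinReps n E w) (hj : 1 ≤ j)
    (hjn : j + 1 ≤ n) (h : w (j + 1) < w j) : MinReps n E (w * sAdj j) :=
  (hmin.mul_sAdj_iff hw hj hjn).2 fun ⟨e, _⟩ => by omega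

theorem MinReps.strictMonoOn_symm (hw : IsPermOn n w) (hmin : MinReps n E w) {a b : ℕ}
    (ha : 1 ≤ a) (hb : b ≤ n) (hE : ∀ k, a ≤ k → k < b → k ∉ E) :
    StrictMonoOn w.symm (Set.Icc a b) := by
  rw [minReps_iff hw] at hmin
  refine strictMonoOn_of_lt_succ Set.ordConnected_Icc fun k _ hk hk1 => ?_
  simp only [Order.succ_eq_add_one, Set.mem_Icc] at hk hk1
  exact hmin k (by omega) (by omega) (hE k hk.1 (by omega))

end MinReps

section Criterion

variable {i m l : ℕ} {u v w : Equiv.Perm ℕ}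

theorem posLT_mono_left {m' : ℕ} (h : m ≤ m') : posLT n m l w ≤ posLT n m' l w :=
  card_le_card fun r hr => by
    simp only [mem_filter, mem_Icc] at hr ⊢
    omega

theorem posLT_of_le_left (hw : IsPermOn n w) {c : ℕ} (hc : n ≤ c) :
    posLT n c l w = ((Icc 1 n).filter (· < l)).card := by
  refine congrArg card (filter_congr fun r hr => ?_)
  have := hw.apply_mem_Icc_iff.2 hr
  simp only [mem_Icc] at this ⊢
  omega

theorem posLT_eq_min_of_le (hw : IsPermOn n w) (hmin : MinReps n {i - 1, i} w)
    (hi : i ≤ n - 1) {c : ℕ} (hc : c ≤ i - 1) (l : ℕ) :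
    posLT n c l w = min c (posLT n (i - 1) l w) := by
  rw [posLT_eq_card_filter_symm hw (by omega), posLT_eq_card_filter_symm hw (by omega),
    card_filter_Icc_of_strictMonoOn (hmin.strictMonoOn_symm hw le_rfl (by omega)
      fun k _ hk => by simp; omega) hc, Nat.add_sub_cancel]

theorem posLT_eq_add_min_of_le (hw : IsPermOn n w) (hmin : MinReps n {i - 1, i} w)
    {c : ℕ} (hic : i ≤ c) (hc : c ≤ n) (l : ℕ) :
    posLT n c l w = posLT n i l w + min (c - i) (posLT n n l w - posLT n i l w) := by
  rw [posLT_eq_card_filter_symm hw hc, posLT_eq_card_filter_symm hw le_rfl,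
    posLT_eq_card_filter_symm hw (hic.trans hc), card_filter_Icc_add _ (by omega) hic,
    card_filter_Icc_add _ (by omega) (hic.trans hc), card_filter_Icc_of_strictMonoOn
      (hmin.strictMonoOn_symm hw (by omega) le_rfl fun k hk _ => by simp; omega) hc]
  omega

/-- The positions of the values `1, …, i - 1`, and those of `i + 1, …, n`, of a minimal
representative increase, so all its ranks are determined by those at `i - 1` and `i`. -/
theorem forall_posLT_le_of_minReps (hu : IsPermOn n u) (hv : IsPermOn n v)
    (hu' : MinReps n {i - 1, i} u) (hv' : MinReps n {i - 1, i} v) (hi : i ≤ n - 1)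
    (hlow : ∀ l, posLT n (i - 1) l v ≤ posLT n (i - 1) l u)
    (hmid : ∀ l, posLT n i l v ≤ posLT n i l u) (c l : ℕ) :
    posLT n c l v ≤ posLT n c l u := by
  rcases le_or_gt c (i - 1) with hc | hc
  · rw [posLT_eq_min_of_le hu hu' hi hc, posLT_eq_min_of_le hv hv' hi hc]
    exact min_le_min le_rfl (hlow l)
  rcases le_or_gt c n with hcn | hcn
  · rw [posLT_eq_add_min_of_le hu hu' (by omega) hcn, posLT_eq_add_min_of_le hv hv' (by omega) hcn,
      posLT_of_le_left hu le_rfl, posLT_of_le_left hv le_rfl]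
    have := hmid l
    have := posLT_mono_left (n := n) (l := l) (w := u) (by omega : i ≤ n)
    rw [posLT_of_le_left hu le_rfl] at this
    omega
  · rw [posLT_of_le_left hu hcn.le, posLT_of_le_left hv hcn.le]

theorem bruhatLE_iff_of_minReps (hu : IsPermOn n u) (hv : IsPermOn n v)
    (hu' : MinReps n {i - 1, i} u) (hv' : MinReps n {i - 1, i} v) (hi1 : 2 ≤ i)
    (hi2 : i ≤ n - 1) (hpos : u.symm i ≤ v.symm i) :
    BruhatLE n u v ↔ ∀ l, posLT n (i - 1) l v ≤ posLT n (i - 1) l u := by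
  rw [bruhatLE_iff_posLT_le hu hv]
  refine ⟨fun h l => h _ l, fun h => forall_posLT_le_of_minReps hu hv hu' hv' hi2 h fun l => ?_⟩
  have hi : i - 1 + 1 = i := by omega
  have hu'' := posLT_succ_left (l := l) hu (m := i - 1) (by omega)
  have hv'' := posLT_succ_left (l := l) hv (m := i - 1) (by omega)
  rw [hi] at hu'' hv''
  have := h l
  split_ifs at hu'' hv'' <;> omega

theorem forall_posLT_le_of_lt_of_mem_sdiff
    (h : ∀ r ∈ lowPos n m v \ lowPos n m u, posLT n m r v < posLT n m r u) (l : ℕ) :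
    posLT n m l v ≤ posLT n m l u := by
  induction l with
  | zero => simp [posLT]
  | succ l ih =>
    rw [posLT_succ, posLT_succ]
    by_cases hv : l ∈ lowPos n m v <;> by_cases hu : l ∈ lowPos n m u
    · simpa [hu, hv]
    · have := h l (mem_sdiff.2 ⟨hv, hu⟩)
      simp only [hu, hv, ↓reduceIte]
      omega
    · simp only [hu, hv, ↓reduceIte]
      omega
    · simpa [hu, hv]

theorem symm_ne_of_lowPos_eq (hu : IsPermOn n u) (hv : IsPermOn n v)
    (hu' : MinReps n {i - 1, i} u) (hv' : MinReps n {i - 1, i} v) (hi1 : 2 ≤ i)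
    (hi2 : i ≤ n - 1) (hbr : BruhatLE n u v) (hne : u ≠ v)
    (hA : lowPos n (i - 1) u = lowPos n (i - 1) v) : u.symm i ≠ v.symm i := fun e => by
  have hvu := (bruhatLE_iff_of_minReps hv hu hv' hu' hi1 hi2 e.ge).2 fun l => by
    rw [posLT_eq_card_filter_lowPos, posLT_eq_card_filter_lowPos, hA]
  have := hbr.invNum_lt hne
  have := hvu.invNum_le
  omega

/-- `v s_j` has the value `i` at `j`, before `u s_j` does, and the smaller values at the same
positions. -/
theorem not_bruhatLE_mul_sAdj (hu : IsPermOn n u) (hv : IsPermOn n v) (hi : 1 ≤ i) (hin : i ≤ n)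
    (hj : 1 ≤ j) (hjn : j + 1 ≤ n) (hA : lowPos n (i - 1) u = lowPos n (i - 1) v)
    (hP : v.symm i = j + 1) (hp : u.symm i = j) :
    ¬ BruhatLE n (u * sAdj j) (v * sAdj j) := fun hb => by
  have hus := hu.mul (isPermOn_sAdj hj hjn)
  have hvs := hv.mul (isPermOn_sAdj hj hjn)
  have key := (bruhatLE_iff_posLT_le hus hvs).1 hb i (j + 1)
  have hj1v : j + 1 ∉ lowPos n (i - 1) v := fun h => symm_ne_of_mem_lowPos h hP
  have hposLT : posLT n (i - 1) j u = posLT n (i - 1) j v := by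
    rw [posLT_eq_card_filter_lowPos, hA, ← posLT_eq_card_filter_lowPos]
  have hi' : i - 1 + 1 = i := by omega
  have hus' := posLT_succ_left (m := i - 1) (l := j + 1) hus (by omega)
  have hvs' := posLT_succ_left (m := i - 1) (l := j + 1) hvs (by omega)
  rw [hi', posLT_mul_sAdj_succ (m := i - 1) hj hjn, mul_sAdj_symm_apply, hp, sAdj_apply_left,
    if_neg (by rwa [hA]), if_neg (lt_irrefl _)] at hus'
  rw [hi', posLT_mul_sAdj_succ (m := i - 1) hj hjn, mul_sAdj_symm_apply, hP, sAdj_apply_right,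
    if_neg hj1v, if_pos (Nat.lt_succ_self j)] at hvs'
  omega

end Criterion

/-! ## Brenti's polynomial -/

section BrentiPoly

variable {i j r : ℕ} {u v : Equiv.Perm ℕ}

/-- The exponent `ã_r(u, v)` of the formula. -/
def aTilde (n i : ℕ) (u v : Equiv.Perm ℕ) (r : ℕ) : ℤ :=
  posLT n (i - 1) r u - posLT n (i - 1) r v

/-- The factor `1 - q + c q^(1 + ã_{v⁻¹(i)})` of the formula. -/
noncomputable def cFactor (n i : ℕ) (u v : Equiv.Perm ℕ) : ℤ[X] :=
  1 - X + if u.symm i = v.symm i then X ^ (1 + (aTilde n i u v (v.symm i)).toNat) else 0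

/-- The factor at `r` of the product over `D̃(u, v)`, extended by `1`. -/
noncomputable def dFactor (n i : ℕ) (u v : Equiv.Perm ℕ) (r : ℕ) : ℤ[X] :=
  if r ∈ lowPos n (i - 1) v \ lowPos n (i - 1) u then 1 - X ^ (aTilde n i u v r).toNat else 1

/-- The right-hand side of Brenti's formula. The sign `(-1)^(ℓ(u) + ℓ(v))` is the paper's
`(-1)^(ℓ(v) - ℓ(u))` whenever `ℓ(u) ≤ ℓ(v)`, without truncated subtraction. -/
noncomputable def brentiPoly (n i : ℕ) (u v : Equiv.Perm ℕ) : ℤ[X] :=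
  (-1) ^ (invNum n u + invNum n v) * cFactor n i u v *
    ∏ r ∈ lowPos n (i - 1) v \ lowPos n (i - 1) u, (1 - X ^ (aTilde n i u v r).toNat)

theorem neg_one_pow_add_eq_pow_sub {R : Type*} [Monoid R] [HasDistribNeg R] {a b : ℕ}
    (h : a ≤ b) :
    (-1 : R) ^ (a + b) = (-1) ^ (b - a) := by
  obtain ⟨k, rfl⟩ := Nat.exists_eq_add_of_le h
  rw [Nat.add_sub_cancel_left, ← add_assoc, ← two_mul, pow_add, pow_mul, neg_one_sq, one_pow,
    one_mul]

theorem brentiPoly_self (u : Equiv.Perm ℕ) : brentiPoly n i u u = 1 := by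
  simp [brentiPoly, cFactor, aTilde, ← two_mul, pow_mul]

theorem brentiPoly_eq_zero_of_not_bruhatLE (hu : IsPermOn n u) (hv : IsPermOn n v)
    (hu' : MinReps n {i - 1, i} u) (hv' : MinReps n {i - 1, i} v) (hi1 : 2 ≤ i)
    (hi2 : i ≤ n - 1) (hpos : u.symm i ≤ v.symm i) (h : ¬ BruhatLE n u v) :
    brentiPoly n i u v = 0 := by
  by_contra hne
  refine h ((bruhatLE_iff_of_minReps hu hv hu' hv' hi1 hi2 hpos).2
    (forall_posLT_le_of_lt_of_mem_sdiff fun r hr => not_le.1 fun hle => hne ?_))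
  have : (aTilde n i u v r).toNat = 0 := by
    rw [aTilde, Int.toNat_eq_zero]
    omega
  rw [brentiPoly, prod_eq_zero hr (by simp [this]), mul_zero]

noncomputable def prodAway (n i j : ℕ) (u v : Equiv.Perm ℕ) : ℤ[X] :=
  ∏ r ∈ ((Icc 1 n).erase j).erase (j + 1), dFactor n i u v r

theorem prod_eq_dFactor_mul_prodAway (hj : 1 ≤ j) (hjn : j + 1 ≤ n) :
    ∏ r ∈ lowPos n (i - 1) v \ lowPos n (i - 1) u, (1 - X ^ (aTilde n i u v r).toNat) =
      dFactor n i u v j * dFactor n i u v (j + 1) * prodAway n i j u v := by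
  have hsub : lowPos n (i - 1) v \ lowPos n (i - 1) u ⊆ Icc 1 n :=
    fun r hr => (mem_lowPos.1 (mem_sdiff.1 hr).1).1
  rw [← inter_eq_right.2 hsub, ← prod_ite_mem, mul_assoc, prodAway,
    mul_prod_erase _ _ (mem_erase.2 ⟨by omega, by simp; omega⟩),
    mul_prod_erase _ _ (by rw [mem_Icc]; omega)]
  rfl

theorem dFactor_mul_sAdj_left (hj : 1 ≤ j) (hjn : j + 1 ≤ n) (hr : r ≠ j) (hr' : r ≠ j + 1) :
    dFactor n i (u * sAdj j) v r = dFactor n i u v r := by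
  simp only [dFactor, aTilde, mem_sdiff, mem_lowPos_mul_sAdj hj hjn, sAdj_apply_of_ne hr hr',
    posLT_mul_sAdj_of_ne hj hjn hr']

theorem dFactor_mul_sAdj_right (hj : 1 ≤ j) (hjn : j + 1 ≤ n) (hr : r ≠ j) (hr' : r ≠ j + 1) :
    dFactor n i u (v * sAdj j) r = dFactor n i u v r := by
  simp only [dFactor, aTilde, mem_sdiff, mem_lowPos_mul_sAdj hj hjn, sAdj_apply_of_ne hr hr',
    posLT_mul_sAdj_of_ne hj hjn hr']

theorem prodAway_mul_sAdj_left (hj : 1 ≤ j) (hjn : j + 1 ≤ n) :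
    prodAway n i j (u * sAdj j) v = prodAway n i j u v :=
  prod_congr rfl fun r hr => by
    simp only [mem_erase] at hr
    exact dFactor_mul_sAdj_left hj hjn hr.2.1 hr.1

theorem prodAway_mul_sAdj_right (hj : 1 ≤ j) (hjn : j + 1 ≤ n) :
    prodAway n i j u (v * sAdj j) = prodAway n i j u v :=
  prod_congr rfl fun r hr => by
    simp only [mem_erase] at hr
    exact dFactor_mul_sAdj_right hj hjn hr.2.1 hr.1

theorem aTilde_mul_sAdj_of_ne {u' v' : Equiv.Perm ℕ} (hj : 1 ≤ j) (hjn : j + 1 ≤ n)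
    (hu : u' = u ∨ u' = u * sAdj j) (hv : v' = v ∨ v' = v * sAdj j) (hr : r ≠ j + 1) :
    aTilde n i u' v' r = aTilde n i u v r := by
  rcases hu with rfl | rfl <;> rcases hv with rfl | rfl <;>
    simp only [aTilde, posLT_mul_sAdj_of_ne hj hjn hr]

theorem prod_eq_dFactor_succ_mul (hj : 1 ≤ j) (hjn : j + 1 ≤ n)
    (hjv : j ∉ lowPos n (i - 1) v) :
    ∏ r ∈ lowPos n (i - 1) v \ lowPos n (i - 1) u, (1 - X ^ (aTilde n i u v r).toNat) =
      dFactor n i u v (j + 1) * prodAway n i j u v := by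
  rw [prod_eq_dFactor_mul_prodAway hj hjn, dFactor, if_neg fun h => hjv (mem_sdiff.1 h).1,
    one_mul]

theorem prod_mul_sAdj_mul_sAdj (hj : 1 ≤ j) (hjn : j + 1 ≤ n)
    (hjv : j ∉ lowPos n (i - 1) v) :
    ∏ r ∈ lowPos n (i - 1) (v * sAdj j) \ lowPos n (i - 1) (u * sAdj j),
        (1 - X ^ (aTilde n i (u * sAdj j) (v * sAdj j) r).toNat) =
      (if j + 1 ∈ lowPos n (i - 1) v ∧ j + 1 ∉ lowPos n (i - 1) u then
        1 - X ^ (aTilde n i u v j).toNat else 1) * prodAway n i j u v := by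
  rw [prod_eq_dFactor_mul_prodAway hj hjn, prodAway_mul_sAdj_left hj hjn,
    prodAway_mul_sAdj_right hj hjn, dFactor, dFactor,
    aTilde_mul_sAdj_of_ne hj hjn (.inr rfl) (.inr rfl) (by omega)]
  simp only [mem_sdiff, mem_lowPos_mul_sAdj hj hjn, sAdj_apply_left, sAdj_apply_right, hjv,
    false_and, if_false, mul_one]

theorem prod_mul_sAdj_right (hj : 1 ≤ j) (hjn : j + 1 ≤ n)
    (hjv : j ∉ lowPos n (i - 1) v) :
    ∏ r ∈ lowPos n (i - 1) (v * sAdj j) \ lowPos n (i - 1) u,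
        (1 - X ^ (aTilde n i u (v * sAdj j) r).toNat) =
      (if j + 1 ∈ lowPos n (i - 1) v ∧ j ∉ lowPos n (i - 1) u then
        1 - X ^ (aTilde n i u v j).toNat else 1) * prodAway n i j u v := by
  rw [prod_eq_dFactor_mul_prodAway hj hjn, prodAway_mul_sAdj_right hj hjn, dFactor, dFactor,
    aTilde_mul_sAdj_of_ne hj hjn (.inl rfl) (.inr rfl) (by omega)]
  simp only [mem_sdiff, mem_lowPos_mul_sAdj hj hjn, sAdj_apply_left, sAdj_apply_right, hjv,
    false_and, if_false, mul_one]

theorem aTilde_succ :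
    aTilde n i u v (j + 1) = aTilde n i u v j + (if j ∈ lowPos n (i - 1) u then 1 else 0) -
      (if j ∈ lowPos n (i - 1) v then 1 else 0) := by
  simp only [aTilde, posLT_succ]
  push_cast
  ring

theorem aTilde_mul_sAdj_succ (hj : 1 ≤ j) (hjn : j + 1 ≤ n) :
    aTilde n i (u * sAdj j) (v * sAdj j) (j + 1) = aTilde n i u v j +
      (if j + 1 ∈ lowPos n (i - 1) u then 1 else 0) -
      (if j + 1 ∈ lowPos n (i - 1) v then 1 else 0) := by
  simp only [aTilde, posLT_mul_sAdj_succ hj hjn]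
  push_cast
  ring

theorem cFactor_mul_sAdj (hj : 1 ≤ j) (hjn : j + 1 ≤ n) (hP : v.symm i ≠ j + 1)
    (h : ¬ (u.symm i = j ∧ v.symm i = j)) :
    cFactor n i (u * sAdj j) (v * sAdj j) = cFactor n i u v := by
  simp only [cFactor, mul_sAdj_symm_apply, (sAdj j).injective.eq_iff]
  split_ifs with hp
  · rw [sAdj_apply_of_ne (fun e => h ⟨hp.trans e, e⟩) hP,
      aTilde_mul_sAdj_of_ne hj hjn (.inr rfl) (.inr rfl) hP]
  · rfl

theorem cFactor_mul_sAdj_right (hj : 1 ≤ j) (hjn : j + 1 ≤ n) (hP : v.symm i ≠ j + 1)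
    (hpos : u.symm i ≤ v.symm i) (h : ¬ (u.symm i = j ∧ v.symm i = j)) :
    cFactor n i u (v * sAdj j) = cFactor n i u v := by
  simp only [cFactor, mul_sAdj_symm_apply]
  by_cases hPj : v.symm i = j
  · rw [hPj, sAdj_apply_left, if_neg (by omega), if_neg (by omega)]
  · rw [sAdj_apply_of_ne hPj hP, aTilde_mul_sAdj_of_ne hj hjn (.inl rfl) (.inr rfl) hP]

theorem cFactor_of_ne (h : u.symm i ≠ v.symm i) : cFactor n i u v = 1 - X := by
  rw [cFactor, if_neg h, add_zero]

end BrentiPoly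

section Branches

/-! Deodhar's recursion at a descent `j` of `v` with `v (j + 1) < i ≤ v j`. -/

variable {i j : ℕ} {u v : Equiv.Perm ℕ}

theorem brentiPoly_mul_sAdj_of_descent (hu : IsPermOn n u) (hv : IsPermOn n v) (hj : 1 ≤ j)
    (hjn : j + 1 ≤ n) (hjv : j ∉ lowPos n (i - 1) v) (hj1v : j + 1 ∈ lowPos n (i - 1) v)
    (h : u (j + 1) < u j) : brentiPoly n i (u * sAdj j) (v * sAdj j) = brentiPoly n i u v := by
  have hj1I : j + 1 ∈ Icc 1 n := by rw [mem_Icc]; omega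
  have hP := symm_ne_of_mem_lowPos hj1v
  rw [brentiPoly, brentiPoly, prod_mul_sAdj_mul_sAdj hj hjn hjv,
    prod_eq_dFactor_succ_mul hj hjn hjv, ← invNum_mul_sAdj_of_gt hu hj hjn h,
    ← invNum_mul_sAdj_of_gt hv hj hjn (hv.apply_succ_lt_of_notMem_lowPos hj hjv hj1v)]
  have hc : cFactor n i (u * sAdj j) (v * sAdj j) = cFactor n i u v := by
    by_cases hp : u.symm i = j ∧ v.symm i = j
    · have hj1u : j + 1 ∈ lowPos n (i - 1) u := by
        rw [hu.mem_lowPos_iff hj1I]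
        have := (Equiv.symm_apply_eq _).1 hp.1
        omega
      simp only [cFactor, mul_sAdj_symm_apply, hp.1, hp.2, sAdj_apply_left,
        aTilde_mul_sAdj_succ hj hjn, hj1u, hj1v, ↓reduceIte, add_sub_cancel_right]
    · exact cFactor_mul_sAdj hj hjn hP hp
  have hd : (if j + 1 ∈ lowPos n (i - 1) v ∧ j + 1 ∉ lowPos n (i - 1) u then
      1 - X ^ (aTilde n i u v j).toNat else 1) = dFactor n i u v (j + 1) := by
    by_cases hj1u : j + 1 ∈ lowPos n (i - 1) u
    · simp [dFactor, hj1u]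
    · have hju : j ∉ lowPos n (i - 1) u := by
        rw [hu.mem_lowPos_iff hj1I] at hj1u
        rw [hu.mem_lowPos_iff (by rw [mem_Icc]; omega)]
        omega
      simp [dFactor, aTilde_succ, hj1u, hju, hjv, hj1v]
  rw [hc, hd]
  ring

theorem brentiPoly_mul_sAdj_right_of_consecutive (hu : IsPermOn n u) (hv : IsPermOn n v)
    (hj : 1 ≤ j) (hjn : j + 1 ≤ n) (hjv : j ∉ lowPos n (i - 1) v)
    (hj1v : j + 1 ∈ lowPos n (i - 1) v) (hpos : u.symm i ≤ v.symm i)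
    (hcons : u (j + 1) = u j + 1) (hE : u j ∉ ({i - 1, i} : Set ℕ)) :
    brentiPoly n i u (v * sAdj j) = - brentiPoly n i u v := by
  simp only [Set.mem_insert_iff, Set.mem_singleton_iff, not_or] at hE
  have hpj : u.symm i ≠ j := fun e => hE.2 ((Equiv.symm_apply_eq _).1 e).symm
  have hju : j ∈ lowPos n (i - 1) u ↔ j + 1 ∈ lowPos n (i - 1) u := by
    rw [hu.mem_lowPos_iff (by rw [mem_Icc]; omega), hu.mem_lowPos_iff (by rw [mem_Icc]; omega)]
    omega
  rw [brentiPoly, brentiPoly, prod_mul_sAdj_right hj hjn hjv, prod_eq_dFactor_succ_mul hj hjn hjv,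
    cFactor_mul_sAdj_right hj hjn (symm_ne_of_mem_lowPos hj1v) hpos fun h => hpj h.1,
    ← invNum_mul_sAdj_of_gt hv hj hjn (hv.apply_succ_lt_of_notMem_lowPos hj hjv hj1v)]
  by_cases hj1u : j + 1 ∈ lowPos n (i - 1) u
  · simp only [hju, hj1u, not_true_eq_false, and_false, ↓reduceIte, one_mul, dFactor, mem_sdiff]
    ring
  · simp only [hj1v, hju, hj1u, not_false_eq_true, and_self, ↓reduceIte, dFactor, mem_sdiff,
      aTilde_succ, add_zero, hjv, sub_zero]
    ring

theorem brentiPoly_eq_of_ascent_of_mem (hu : IsPermOn n u) (hv : IsPermOn n v)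
    (hj : 1 ≤ j) (hjn : j + 1 ≤ n) (hjv : j ∉ lowPos n (i - 1) v)
    (hj1v : j + 1 ∈ lowPos n (i - 1) v) (hpos : u.symm i ≤ v.symm i)
    (hle : posLT n (i - 1) j v ≤ posLT n (i - 1) j u) (h : u j < u (j + 1))
    (hju : j ∈ lowPos n (i - 1) u) :
    brentiPoly n i u v =
      X * brentiPoly n i (u * sAdj j) (v * sAdj j) + (X - 1) * brentiPoly n i u (v * sAdj j) := by
  have hP := symm_ne_of_mem_lowPos hj1v
  have hpj := symm_ne_of_mem_lowPos hju
  rw [brentiPoly, brentiPoly, brentiPoly, prod_mul_sAdj_mul_sAdj hj hjn hjv,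
    prod_mul_sAdj_right hj hjn hjv, prod_eq_dFactor_succ_mul hj hjn hjv,
    invNum_mul_sAdj_of_lt hu hj hjn h,
    ← invNum_mul_sAdj_of_gt hv hj hjn (hv.apply_succ_lt_of_notMem_lowPos hj hjv hj1v),
    cFactor_mul_sAdj hj hjn hP fun h => hpj h.1,
    cFactor_mul_sAdj_right hj hjn hP hpos fun h => hpj h.1]
  by_cases hj1u : j + 1 ∈ lowPos n (i - 1) u
  · simp only [dFactor, mem_sdiff, hj1u, not_true_eq_false, and_false, ↓reduceIte, one_mul, hju]
    ring
  · have hx : (aTilde n i u v j + 1).toNat = (aTilde n i u v j).toNat + 1 := by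
      rw [aTilde]
      omega
    simp only [dFactor, mem_sdiff, hj1v, hj1u, not_false_eq_true, and_self, ↓reduceIte,
      aTilde_succ, hju, hjv, sub_zero, hx, pow_succ, not_true_eq_false, and_false, one_mul]
    ring

theorem brentiPoly_eq_of_ascent_of_notMem (hu : IsPermOn n u) (hv : IsPermOn n v)
    (hj : 1 ≤ j) (hjn : j + 1 ≤ n) (hjv : j ∉ lowPos n (i - 1) v)
    (hj1v : j + 1 ∈ lowPos n (i - 1) v) (hpos : u.symm i ≤ v.symm i)
    (hle : posLT n (i - 1) (j + 2) v ≤ posLT n (i - 1) (j + 2) u) (h : u j < u (j + 1))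
    (hju : j ∉ lowPos n (i - 1) u) :
    brentiPoly n i u v =
      X * brentiPoly n i (u * sAdj j) (v * sAdj j) + (X - 1) * brentiPoly n i u (v * sAdj j) := by
  have hP := symm_ne_of_mem_lowPos hj1v
  have hj1u : j + 1 ∉ lowPos n (i - 1) u := by
    rw [hu.mem_lowPos_iff (by rw [mem_Icc]; omega)] at hju
    rw [hu.mem_lowPos_iff (by rw [mem_Icc]; omega)]
    omega
  rw [brentiPoly, brentiPoly, brentiPoly, prod_mul_sAdj_mul_sAdj hj hjn hjv,
    prod_mul_sAdj_right hj hjn hjv, prod_eq_dFactor_succ_mul hj hjn hjv,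
    invNum_mul_sAdj_of_lt hu hj hjn h,
    ← invNum_mul_sAdj_of_gt hv hj hjn (hv.apply_succ_lt_of_notMem_lowPos hj hjv hj1v)]
  simp only [dFactor, aTilde_succ, mem_sdiff, hj1u, hju, hjv, hj1v, not_false_eq_true,
    and_self, ↓reduceIte, add_zero, sub_zero]
  by_cases hp : u.symm i = j ∧ v.symm i = j
  · -- `ã_j(u, v) ≥ 1`, and it drops by one at `j + 1` for `(u s_j, v s_j)`
    obtain ⟨t, ht⟩ : ∃ t : ℕ, aTilde n i u v j = t + 1 := by
      rw [posLT_succ, posLT_succ, posLT_succ, posLT_succ] at hle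
      simp only [hju, hj1u, hjv, hj1v, ↓reduceIte] at hle
      exact ⟨(aTilde n i u v j).toNat - 1, by rw [aTilde]; omega⟩
    simp only [cFactor, mul_sAdj_symm_apply, hp.1, hp.2, sAdj_apply_left,
      aTilde_mul_sAdj_succ hj hjn, hj1u, hj1v, ↓reduceIte, ht, add_zero, add_sub_cancel_right,
      Int.toNat_natCast, show ((t : ℤ) + 1).toNat = t + 1 by omega, if_neg (by omega : j ≠ j + 1)]
    ring
  · rw [cFactor_mul_sAdj hj hjn hP hp, cFactor_mul_sAdj_right hj hjn hP hpos hp]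
    ring

/-! Deodhar's recursion at the descent `j = v⁻¹(i) - 1` when `u⁻¹([i-1]) = v⁻¹([i-1])`. -/

theorem brentiPoly_eq_of_symm_lt {u' v' : Equiv.Perm ℕ} (hj : 1 ≤ j) (hjn : j + 1 ≤ n)
    (hjv : j ∉ lowPos n (i - 1) v) (hP : v.symm i = j + 1) (hp : u.symm i < j)
    (hu' : u' = u ∨ u' = u * sAdj j) (hv' : v' = v ∨ v' = v * sAdj j) :
    brentiPoly n i u' v' = (-1) ^ (invNum n u' + invNum n v') * (1 - X) * prodAway n i j u v := by
  have hj1v : j + 1 ∉ lowPos n (i - 1) v := fun h => symm_ne_of_mem_lowPos h hP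
  have hsp : sAdj j (u.symm i) = u.symm i := sAdj_apply_of_ne (by omega) (by omega)
  have hc : cFactor n i u' v' = 1 - X := by
    refine cFactor_of_ne ?_
    rcases hu' with rfl | rfl <;> rcases hv' with rfl | rfl <;>
      simp only [mul_sAdj_symm_apply, hsp, hP, sAdj_apply_right] <;> omega
  have hv'j : j ∉ lowPos n (i - 1) v' ∧ j + 1 ∉ lowPos n (i - 1) v' := by
    rcases hv' with rfl | rfl
    · exact ⟨hjv, hj1v⟩
    · simp only [mem_lowPos_mul_sAdj hj hjn, sAdj_apply_left, sAdj_apply_right]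
      exact ⟨hj1v, hjv⟩
  have hQ : prodAway n i j u' v' = prodAway n i j u v := by
    rcases hu' with rfl | rfl <;> rcases hv' with rfl | rfl <;>
      simp only [prodAway_mul_sAdj_left hj hjn, prodAway_mul_sAdj_right hj hjn]
  rw [brentiPoly, hc, prod_eq_dFactor_mul_prodAway hj hjn, hQ, dFactor, dFactor,
    if_neg fun h => hv'j.1 (mem_sdiff.1 h).1, if_neg fun h => hv'j.2 (mem_sdiff.1 h).1]
  ring

theorem brentiPoly_eq_X_sub_one_mul (hv : IsPermOn n v) (hj : 1 ≤ j) (hjn : j + 1 ≤ n)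
    (hA : lowPos n (i - 1) u = lowPos n (i - 1) v) (hP : v.symm i = j + 1) (hp : u.symm i = j) :
    brentiPoly n i u v = (X - 1) * brentiPoly n i u (v * sAdj j) := by
  have hjv : j ∉ lowPos n (i - 1) v := fun h => symm_ne_of_mem_lowPos (hA ▸ h) hp
  have hj1v : j + 1 ∉ lowPos n (i - 1) v := fun h => symm_ne_of_mem_lowPos h hP
  have hvj := hv.apply_succ_lt_of_symm_eq hj hjn hjv hP
  have hx : aTilde n i u v j = 0 := by
    rw [aTilde, posLT_eq_card_filter_lowPos, posLT_eq_card_filter_lowPos, hA, sub_self]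
  rw [brentiPoly, brentiPoly, prod_mul_sAdj_right hj hjn hjv, prod_eq_dFactor_succ_mul hj hjn hjv,
    cFactor_of_ne (by omega), ← invNum_mul_sAdj_of_gt hv hj hjn hvj]
  simp only [cFactor, dFactor, mem_sdiff, hj1v, mul_sAdj_symm_apply, hP, hp, sAdj_apply_right,
    false_and, ↓reduceIte, hx, Int.toNat_zero,
    aTilde_mul_sAdj_of_ne hj hjn (.inl rfl) (.inr rfl) (by omega : j ≠ j + 1)]
  ring

end Branches

section Induction

variable {i j : ℕ} {u v : Equiv.Perm ℕ} {R : Equiv.Perm ℕ → Equiv.Perm ℕ → ℤ[X]}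

/-- The induction hypothesis at `v`, for the recursion along a descent `j` of `v`. -/
def AgreesAtDescents (n i : ℕ) (R : Equiv.Perm ℕ → Equiv.Perm ℕ → ℤ[X]) (v : Equiv.Perm ℕ) :
    Prop :=
  ∀ j, 1 ≤ j → j + 1 ≤ n → v (j + 1) < v j → ∀ u', IsPermOn n u' → MinReps n {i - 1, i} u' →
    u'.symm i ≤ (v * sAdj j).symm i → R u' (v * sAdj j) = brentiPoly n i u' (v * sAdj j)

theorem R_eq_brentiPoly_of_descent (hR : IsRFamilyQ n {i - 1, i} R)
    (hu : IsPermOn n u) (hv : IsPermOn n v) (hu' : MinReps n {i - 1, i} u)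
    (hv' : MinReps n {i - 1, i} v) (hi1 : 2 ≤ i) (hi2 : i ≤ n - 1) (hbr : BruhatLE n u v)
    (hne : u ≠ v) (hpos : u.symm i ≤ v.symm i)
    (hj : 1 ≤ j) (hjv : j ∉ lowPos n (i - 1) v) (hj1v : j + 1 ∈ lowPos n (i - 1) v)
    (ih : AgreesAtDescents n i R v) : R u v = brentiPoly n i u v := by
  have hjn : j + 1 ≤ n := (mem_Icc.1 (mem_lowPos.1 hj1v).1).2
  have hvj := hv.apply_succ_lt_of_notMem_lowPos hj hjv hj1v
  have hP := symm_ne_of_mem_lowPos hj1v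
  have hposs : (u * sAdj j).symm i ≤ (v * sAdj j).symm i := by
    rw [mul_sAdj_symm_apply, mul_sAdj_symm_apply]
    exact sAdj_apply_le_sAdj_apply hP hpos
  have hposr : u.symm i ≤ (v * sAdj j).symm i := by
    rw [mul_sAdj_symm_apply]
    exact le_sAdj_apply hP hpos
  have hus := hu.mul (isPermOn_sAdj hj hjn)
  have ih := ih j hj hjn hvj
  obtain ⟨hb1, hb2, hb3⟩ := hR.2.2 u v hu' hv' hbr hne j hj (by omega) hvj
  by_cases hd : u (j + 1) < u j
  · rw [hb1 hd, ih _ hus (hu'.mul_sAdj_of_gt hu hj hjn hd) hposs,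
      brentiPoly_mul_sAdj_of_descent hu hv hj hjn hjv hj1v hd]
  have ha : u j < u (j + 1) := lt_of_le_of_ne (not_lt.1 hd) fun e => by
    simpa using u.injective e
  by_cases hm : MinReps n {i - 1, i} (u * sAdj j)
  · have hle := (bruhatLE_iff_of_minReps hu hv hu' hv' hi1 hi2 hpos).1 hbr
    rw [hb2 hd hm, ih _ hus hm hposs, ih u hu hu' hposr]
    by_cases hju : j ∈ lowPos n (i - 1) u
    · exact (brentiPoly_eq_of_ascent_of_mem hu hv hj hjn hjv hj1v hpos (hle j) ha hju).symm
    · exact (brentiPoly_eq_of_ascent_of_notMem hu hv hj hjn hjv hj1v hpos (hle _) ha hju).symm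
  · obtain ⟨hcons, hE⟩ := not_not.1 ((hu'.mul_sAdj_iff hu hj hjn).not.1 hm)
    rw [hb3 hd hm, ih u hu hu' hposr,
      brentiPoly_mul_sAdj_right_of_consecutive hu hv hj hjn hjv hj1v hpos hcons hE, neg_neg]

theorem R_eq_brentiPoly_of_symm_lt (hR : IsRFamilyQ n {i - 1, i} R)
    (hu : IsPermOn n u) (hv : IsPermOn n v) (hu' : MinReps n {i - 1, i} u)
    (hv' : MinReps n {i - 1, i} v) (hbr : BruhatLE n u v) (hne : u ≠ v)
    (hj : 1 ≤ j) (hjn : j + 1 ≤ n) (hjv : j ∉ lowPos n (i - 1) v) (hP : v.symm i = j + 1)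
    (hp : u.symm i < j) (ih : AgreesAtDescents n i R v) : R u v = brentiPoly n i u v := by
  have hvj := hv.apply_succ_lt_of_symm_eq hj hjn hjv hP
  have hlv := invNum_mul_sAdj_of_gt hv hj hjn hvj
  have hus := hu.mul (isPermOn_sAdj hj hjn)
  have hvsi : (v * sAdj j).symm i = j := by rw [mul_sAdj_symm_apply, hP, sAdj_apply_right]
  have husi : (u * sAdj j).symm i ≤ (v * sAdj j).symm i := by
    rw [hvsi, mul_sAdj_symm_apply, sAdj_apply_of_ne (by omega) (by omega)]
    omega
  have ih := ih j hj hjn hvj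
  have hQ := fun {u' v'} => brentiPoly_eq_of_symm_lt (u' := u') (v' := v') hj hjn hjv hP hp
  obtain ⟨hb1, hb2, hb3⟩ := hR.2.2 u v hu' hv' hbr hne j hj (by omega) hvj
  by_cases hd : u (j + 1) < u j
  · rw [hb1 hd, ih _ hus (hu'.mul_sAdj_of_gt hu hj hjn hd) husi, hQ (.inr rfl) (.inr rfl),
      hQ (.inl rfl) (.inl rfl), ← invNum_mul_sAdj_of_gt hu hj hjn hd, ← hlv]
    ring
  have hlu := invNum_mul_sAdj_of_lt hu hj hjn (lt_of_le_of_ne (not_lt.1 hd) fun e => by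
    simpa using u.injective e)
  by_cases hm : MinReps n {i - 1, i} (u * sAdj j)
  · rw [hb2 hd hm, ih _ hus hm husi, ih u hu hu' (by omega), hQ (.inr rfl) (.inr rfl),
      hQ (.inl rfl) (.inr rfl), hQ (.inl rfl) (.inl rfl), hlu, ← hlv]
    ring
  · rw [hb3 hd hm, ih u hu hu' (by omega), hQ (.inl rfl) (.inr rfl), hQ (.inl rfl) (.inl rfl),
      ← hlv]
    ring

theorem R_eq_brentiPoly_of_symm_eq (hR : IsRFamilyQ n {i - 1, i} R)
    (hu : IsPermOn n u) (hv : IsPermOn n v) (hu' : MinReps n {i - 1, i} u)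
    (hv' : MinReps n {i - 1, i} v) (hi1 : 2 ≤ i) (hi2 : i ≤ n - 1) (hbr : BruhatLE n u v)
    (hne : u ≠ v) (hj : 1 ≤ j) (hjn : j + 1 ≤ n) (hA : lowPos n (i - 1) u = lowPos n (i - 1) v)
    (hP : v.symm i = j + 1) (hp : u.symm i = j) (ih : AgreesAtDescents n i R v) :
    R u v = brentiPoly n i u v := by
  have hjv : j ∉ lowPos n (i - 1) v := fun h => symm_ne_of_mem_lowPos (hA ▸ h) hp
  have hvj := hv.apply_succ_lt_of_symm_eq hj hjn hjv hP
  have huj : u j = i := by rw [← hp, Equiv.apply_symm_apply]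
  have hj1u : j + 1 ∉ lowPos n (i - 1) u := by
    rw [hA]
    exact fun h => symm_ne_of_mem_lowPos h hP
  rw [hu.mem_lowPos_iff (by rw [mem_Icc]; omega)] at hj1u
  have hasc : ¬ u (j + 1) < u j := fun h => by
    have : u (j + 1) ≠ u j := fun e => by simpa using u.injective e
    omega
  have hm : MinReps n {i - 1, i} (u * sAdj j) :=
    (hu'.mul_sAdj_iff hu hj hjn).2 fun ⟨_, hE⟩ => hE (by simp [huj])
  obtain ⟨-, hb2, -⟩ := hR.2.2 u v hu' hv' hbr hne j hj (by omega) hvj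
  rw [hb2 hasc hm, hR.1 _ _ hm (hv'.mul_sAdj_of_gt hv hj hjn hvj)
    (not_bruhatLE_mul_sAdj hu hv (by omega) (by omega) hj hjn hA hP hp),
    ih j hj hjn hvj u hu hu' (by rw [mul_sAdj_symm_apply, hP, sAdj_apply_right, hp]),
    brentiPoly_eq_X_sub_one_mul hv hj hjn hA hP hp]
  ring

theorem R_eq_brentiPoly_of_lowPos_eq_Icc (hR : IsRFamilyQ n {i - 1, i} R)
    (hu : IsPermOn n u) (hv : IsPermOn n v) (hu' : MinReps n {i - 1, i} u)
    (hv' : MinReps n {i - 1, i} v) (hi1 : 2 ≤ i) (hi2 : i ≤ n - 1) (hbr : BruhatLE n u v)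
    (hne : u ≠ v) (hpos : u.symm i ≤ v.symm i) (hB : lowPos n (i - 1) v = Icc 1 (i - 1))
    (ih : AgreesAtDescents n i R v) : R u v = brentiPoly n i u v := by
  have hA := lowPos_eq_of_lowPos_eq_Icc hu (by omega) hB
    ((bruhatLE_iff_of_minReps hu hv hu' hv' hi1 hi2 hpos).1 hbr _)
  have hpP := symm_ne_of_lowPos_eq hu hv hu' hv' hi1 hi2 hbr hne hA
  have hpi : i ≤ u.symm i := by
    have hI := (hu.symm.apply_mem_Icc_iff (x := i)).2 (by rw [mem_Icc]; omega)
    have : u.symm i ∉ lowPos n (i - 1) u := fun h => symm_ne_of_mem_lowPos h rfl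
    rw [hA, hB] at this
    simp only [mem_Icc] at this hI
    omega
  obtain ⟨j, hP⟩ : ∃ j, v.symm i = j + 1 := ⟨v.symm i - 1, by omega⟩
  have hjn : j + 1 ≤ n := by
    have := (hv.symm.apply_mem_Icc_iff (x := i)).2 (by rw [mem_Icc]; omega)
    simp only [mem_Icc] at this
    omega
  have hjv : j ∉ lowPos n (i - 1) v := by
    rw [hB, mem_Icc]
    omega
  rcases lt_or_eq_of_le (show u.symm i ≤ j by omega) with hp | hp
  · exact R_eq_brentiPoly_of_symm_lt hR hu hv hu' hv' hbr hne (by omega) hjn hjv hP hp ih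
  · exact R_eq_brentiPoly_of_symm_eq hR hu hv hu' hv' hi1 hi2 hbr hne (by omega) hjn hA hP hp ih

end Induction

theorem R_eq_brentiPoly {i : ℕ} {R : Equiv.Perm ℕ → Equiv.Perm ℕ → ℤ[X]}
    (hR : IsRFamilyQ n {i - 1, i} R) (hi1 : 2 ≤ i) (hi2 : i ≤ n - 1) {u v : Equiv.Perm ℕ}
    (hu : IsPermOn n u) (hv : IsPermOn n v) (hu' : MinReps n {i - 1, i} u)
    (hv' : MinReps n {i - 1, i} v) (hpos : u.symm i ≤ v.symm i) :
    R u v = brentiPoly n i u v := by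
  induction hN : invNum n v using Nat.strong_induction_on generalizing u v with
  | _ N ih =>
  by_cases hbr : BruhatLE n u v
  swap
  · rw [hR.1 u v hu' hv' hbr, brentiPoly_eq_zero_of_not_bruhatLE hu hv hu' hv' hi1 hi2 hpos hbr]
  by_cases hne : u = v
  · rw [hne, hR.2.1 v hv', brentiPoly_self]
  have ih : AgreesAtDescents n i R v := fun j hj hjn hvj u' hu hu' hpos =>
    ih _ (by have := invNum_mul_sAdj_of_gt hv hj hjn hvj; omega) hu (hv.mul (isPermOn_sAdj hj hjn))
      hu' (hv'.mul_sAdj_of_gt hv hj hjn hvj) hpos rfl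
  by_cases hC : ∃ j, 1 ≤ j ∧ j ∉ lowPos n (i - 1) v ∧ j + 1 ∈ lowPos n (i - 1) v
  · obtain ⟨j, hj, hjv, hj1v⟩ := hC
    exact R_eq_brentiPoly_of_descent hR hu hv hu' hv' hi1 hi2 hbr hne hpos hj hjv hj1v ih
  refine R_eq_brentiPoly_of_lowPos_eq_Icc hR hu hv hu' hv' hi1 hi2 hbr hne hpos ?_ ih
  have := eq_Icc_one_card_of_succ_notMem (fun r hr => (mem_Icc.1 (mem_lowPos.1 hr).1).1)
    fun j hj hjv hj1v => hC ⟨j, hj, hjv, hj1v⟩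
  rwa [card_lowPos hv (by omega)] at this

/-- Brenti's formula for `J = S \ {s_(i-1), s_i}` in the case `u⁻¹(i) ≤ v⁻¹(i)`. -/
theorem brenti_formula_two_le (n i : ℕ) (hi1 : 2 ≤ i) (hi2 : i ≤ n - 1)
    (u v : Equiv.Perm ℕ) (hu : IsPermOn n u) (hv : IsPermOn n v)
    (hu' : MinReps n {i - 1, i} u) (hv' : MinReps n {i - 1, i} v)
    (huv : BruhatLE n u v) (hpos : u.symm i ≤ v.symm i)
    (R : Equiv.Perm ℕ → Equiv.Perm ℕ → Polynomial ℤ)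
    (hR : IsRFamilyQ n {i - 1, i} R) :
    R u v = (-1) ^ (invNum n v - invNum n u) *
      (1 - X + (if u.symm i = v.symm i then
          X ^ (1 + ((posLT n (i - 1) (v.symm i) u : ℤ) -
            posLT n (i - 1) (v.symm i) v).toNat)
        else 0)) *
      ∏ j ∈ ((Finset.Icc 1 n).filter (fun r => v r ∈ Finset.Icc 1 (i - 1))) \
             ((Finset.Icc 1 n).filter (fun r => u r ∈ Finset.Icc 1 (i - 1))),
        (1 - X ^ ((posLT n (i - 1) j u : ℤ) - posLT n (i - 1) j v).toNat) := by
  rw [R_eq_brentiPoly hR hi1 hi2 hu hv hu' hv' hpos, brentiPoly,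
    neg_one_pow_add_eq_pow_sub huv.invNum_le]
  rfl
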